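/- arXiv:2308.10017 — 2 statements merged into one kernel-verified Lean document; each statement's English description precedes it below -/
import Mathlib

section
/- Let 𝒢 := ((ℌ_n, ω_n))_{n∈ℕ*} be a *-fusion frame of a Hilbert 𝔄-module ℌ. Then the synthesis operator 𝒯_𝒢 : ℌ → l₂(ℌ), x ↦ (ω_n P_{ℌ_n}(x))_{n∈ℕ*}, is a well-defined bounded 𝔄-linear adjointable operator, and its adjoint is the well-defined bounded operator 𝒯_𝒢* : l₂(ℌ) → ℌ given by 𝒯_𝒢*((y_n)_{n∈ℕ*}) = ∑_{n=1}^∞ ω_n P_{ℌ_n}(y_n), the series converging in ℌ for every (y_n) ∈ l₂(ℌ). -/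
open scoped InnerProductSpace RightActions

/-- The December 2024 Mathlib `CStarModule` (right Hilbert module, inner product
`𝔄`-linear on the right: `⟪x, y <• a⟫ = ⟪x, y⟫ * a`), reproduced verbatim since Mathlib's
`CStarModule` is now a left module with another convention. -/
class RightCStarModule (A : outParam <| Type*) (E : Type*) [NonUnitalSemiring A] [StarRing A]
    [Module ℂ A] [AddCommGroup E] [Module ℂ E] [PartialOrder A] [SMul Aᵐᵒᵖ E] [Norm A] [Norm E]
    extends Inner A E where
  inner_add_right {x} {y} {z} : inner x (y + z) = inner x y + inner x z
  inner_self_nonneg {x} : 0 ≤ inner x x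
  inner_self {x} : inner x x = 0 ↔ x = 0
  inner_op_smul_right {a : A} {x y : E} : inner x (y <• a) = inner x y * a
  inner_smul_right_complex {z : ℂ} {x} {y} : inner x (z • y) = z • inner x y
  star_inner x y : star (inner x y) = inner y x
  norm_eq_sqrt_norm_inner_self x : ‖x‖ = √‖inner x x‖

variable {𝔄 : Type*} [CStarAlgebra 𝔄] [PartialOrder 𝔄] [StarOrderedRing 𝔄]
variable {H : Type*} [NormedAddCommGroup H] [NormedSpace ℂ H] [Module 𝔄ᵐᵒᵖ H]
  [RightCStarModule 𝔄 H] [CompleteSpace H]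

/-- An element of a C*-algebra is *strictly positive* if it is positive and invertible. -/
def IsStrictlyPositive' (a : 𝔄) : Prop := 0 ≤ a ∧ IsUnit a

/-- A *weight* of the C*-algebra `𝔄` is a sequence of central strictly positive elements. -/
def IsWeight (ω : ℕ → 𝔄) : Prop :=
  ∀ n, ω n ∈ Set.center 𝔄 ∧ IsStrictlyPositive' (ω n)

/-- `P` is the orthogonal projection of the Hilbert `𝔄`-module `H` onto the orthogonally
complemented submodule `K`: a bounded `𝔄`-linear idempotent which is self-adjoint with
respect to the `𝔄`-valued inner product and has range `K`. -/
def IsOrthoProjectionOnto (P : H →L[ℂ] H) (K : Submodule 𝔄ᵐᵒᵖ H) : Prop :=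
  (∀ (a : 𝔄) (x : H), P (x <• a) = (P x) <• a) ∧
  (∀ x, P (P x) = P x) ∧
  (∀ x y : H, ⟪P x, y⟫_𝔄 = ⟪x, P y⟫_𝔄) ∧
  (∀ x, P x ∈ K) ∧ (∀ x ∈ K, P x = x)

/-- The weighted sequence of orthogonally complemented submodules whose orthogonal
projections are `P n` is a *-fusion frame of `H` with lower bound `A` and upper bound `B`. -/
def IsFusionFrameWith (P : ℕ → H →L[ℂ] H) (ω : ℕ → 𝔄) (A B : 𝔄) : Prop :=
  IsStrictlyPositive' A ∧ IsStrictlyPositive' B ∧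
  ∀ x : H, Summable (fun n => ω n ^ 2 * ⟪P n x, P n x⟫_𝔄) ∧
    ⟪x <• A, x <• A⟫_𝔄 ≤ ∑' n, ω n ^ 2 * ⟪P n x, P n x⟫_𝔄 ∧
    (∑' n, ω n ^ 2 * ⟪P n x, P n x⟫_𝔄) ≤ ⟪x <• B, x <• B⟫_𝔄

/-- A *-fusion frame (with some pair of strictly positive bounds). -/
def IsFusionFrame (P : ℕ → H →L[ℂ] H) (ω : ℕ → 𝔄) : Prop :=
  ∃ A B : 𝔄, IsFusionFrameWith P ω A B

/-!
Everything follows from the upper frame bound `B`. Put `W_n x := P_n x <• ω_n`; since `ω_n` is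
central and self-adjoint and `P_n` is self-adjoint, `W_n` is self-adjoint for the `𝔄`-valued inner
product, and `∑_{n ∈ F} ⟪W_n x, W_n x⟫ ≤ ⟪x <• B, x <• B⟫` has norm at most `C² ‖x‖²`,
`C = ‖B‖ + 1`, for every finite `F`. For `z = ∑_{n ∈ F} W_n y_n` self-adjointness gives
`⟪z, z⟫ = ∑_{n ∈ F} ⟪W_n z, y_n⟫`, and positivity of `∑ ⟪W_n z - t • y_n, W_n z - t • y_n⟫`
turns this into `2 t ⟪z, z⟫ ≤ ∑ ⟪W_n z, W_n z⟫ + t² ∑ ⟪y_n, y_n⟫`. Taking norms at `t = C²`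
gives `‖z‖² ≤ C² ‖∑_{n ∈ F} ⟪y_n, y_n⟫‖`: this yields the Cauchy criterion for `∑ W_n y_n`, its
norm bound in the limit, and, with the Cauchy–Schwarz inequality making `⟪x, ·⟫` continuous, the
adjoint identity from its finite version.
-/

lemma CStarAlgebra.norm_sum_le_of_tsum_le {A ι : Type*} [CStarAlgebra A] [PartialOrder A]
    [StarOrderedRing A] {f : ι → A} {b : A} (hf : ∀ i, 0 ≤ f i)
    (hsum : Summable f) (hb : ∑' i, f i ≤ b) (s : Finset ι) : ‖∑ i ∈ s, f i‖ ≤ ‖b‖ :=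
  CStarAlgebra.norm_le_norm_of_nonneg_of_le (Finset.sum_nonneg fun i _ => hf i)
    ((hsum.sum_le_tsum s fun i _ => hf i).trans hb)

namespace RightCStarModule

variable {A E : Type*} [CStarAlgebra A] [PartialOrder A]
  [NormedAddCommGroup E] [NormedSpace ℂ E] [Module Aᵐᵒᵖ E] [RightCStarModule A E]

lemma inner_op_smul_left (a : A) (x y : E) : ⟪x <• a, y⟫_A = star a * ⟪x, y⟫_A := by
  rw [← star_inner, inner_op_smul_right, star_mul, star_inner]

def innerₗ (x : E) : E →ₗ[ℂ] A where
  toFun y := ⟪x, y⟫_A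
  map_add' _ _ := inner_add_right
  map_smul' _ _ := inner_smul_right_complex

lemma innerₗ_apply (x y : E) : innerₗ x y = ⟪x, y⟫_A := rfl

lemma inner_sum_right {ι : Type*} (s : Finset ι) (x : E) (y : ι → E) :
    ⟪x, ∑ i ∈ s, y i⟫_A = ∑ i ∈ s, ⟪x, y i⟫_A :=
  map_sum (innerₗ x) y s

lemma inner_sub_right (x y z : E) : ⟪x, y - z⟫_A = ⟪x, y⟫_A - ⟪x, z⟫_A :=
  map_sub (innerₗ x) y z

lemma inner_sub_left (x y z : E) : ⟪x - y, z⟫_A = ⟪x, z⟫_A - ⟪y, z⟫_A := by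
  rw [← star_inner, inner_sub_right, star_sub, star_inner, star_inner]

lemma inner_smul_real_right (t : ℝ) (x y : E) : ⟪x, t • y⟫_A = t • ⟪x, y⟫_A :=
  (innerₗ x).map_smul_of_tower t y

lemma inner_smul_real_left (t : ℝ) (x y : E) : ⟪t • x, y⟫_A = t • ⟪x, y⟫_A := by
  rw [← star_inner, inner_smul_real_right, star_smul, star_trivial, star_inner]

lemma inner_zero_left (y : E) : ⟪(0 : E), y⟫_A = 0 := by
  rw [← star_inner, ← innerₗ_apply, map_zero, star_zero]

lemma norm_sq_eq_norm_inner_self (x : E) : ‖x‖ ^ 2 = ‖⟪x, x⟫_A‖ := by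
  rw [norm_eq_sqrt_norm_inner_self (A := A), Real.sq_sqrt (norm_nonneg _)]

lemma inner_op_smul_of_central {c : A} (hc : c ∈ Set.center A) (hc' : IsSelfAdjoint c)
    (x y : E) : ⟪x <• c, y⟫_A = ⟪x, y <• c⟫_A := by
  rw [inner_op_smul_left, inner_op_smul_right, hc'.star_eq, (Set.mem_center_iff.mp hc).comm]

lemma inner_op_smul_self_of_central {c : A} (hc : c ∈ Set.center A) (hc' : IsSelfAdjoint c)
    (x : E) : ⟪x <• c, x <• c⟫_A = c ^ 2 * ⟪x, x⟫_A := by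
  have hcomm := (Set.mem_center_iff.mp hc).comm
  rw [inner_op_smul_of_central hc hc', inner_op_smul_right, inner_op_smul_right, ← hcomm,
    ← hcomm, ← mul_assoc, sq]

lemma norm_op_smul_le (x : E) (b : A) : ‖x <• b‖ ≤ ‖x‖ * ‖b‖ := by
  refine (pow_le_pow_iff_left₀ (norm_nonneg _) (by positivity) two_ne_zero).mp ?_
  calc ‖x <• b‖ ^ 2 = ‖star b * ⟪x, x⟫_A * b‖ := by
        rw [norm_sq_eq_norm_inner_self (A := A), inner_op_smul_right, inner_op_smul_left,
          mul_assoc]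
    _ ≤ ‖b‖ * ‖⟪x, x⟫_A‖ * ‖b‖ := by
        grw [norm_mul_le, norm_mul_le, norm_star]
    _ = (‖x‖ * ‖b‖) ^ 2 := by rw [← norm_sq_eq_norm_inner_self]; ring

section Order

variable [StarOrderedRing A] {ι : Type*} {T S : ι → E → E} {C : ℝ}

lemma smul_inner_add_inner_le (u y : E) (t : ℝ) :
    t • (⟪u, y⟫_A + ⟪y, u⟫_A) ≤ ⟪u, u⟫_A + t ^ 2 • ⟪y, y⟫_A := by
  have h : ⟪u - t • y, u - t • y⟫_A = ⟪u, u⟫_A + t ^ 2 • ⟪y, y⟫_A - t • (⟪u, y⟫_A + ⟪y, u⟫_A) := by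
    simp only [inner_sub_left, inner_sub_right, inner_smul_real_left, inner_smul_real_right,
      smul_add, smul_sub, smul_smul, sq]
    abel
  exact sub_nonneg.mp (h ▸ inner_self_nonneg)

lemma smul_sum_inner_add_inner_le (s : Finset ι) (u y : ι → E) (t : ℝ) :
    t • (∑ i ∈ s, ⟪u i, y i⟫_A + ∑ i ∈ s, ⟪y i, u i⟫_A) ≤
      ∑ i ∈ s, ⟪u i, u i⟫_A + t ^ 2 • ∑ i ∈ s, ⟪y i, y i⟫_A := by
  rw [← Finset.sum_add_distrib, Finset.smul_sum, Finset.smul_sum, ← Finset.sum_add_distrib]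
  exact Finset.sum_le_sum fun i _ => smul_inner_add_inner_le (u i) (y i) t

lemma norm_inner_le (x y : E) : ‖⟪x, y⟫_A‖ ≤ ‖x‖ * ‖y‖ := by
  rcases eq_or_ne x 0 with rfl | hx
  · simp [inner_zero_left]
  set a := ⟪x, y⟫_A
  have key : ‖x‖ ^ 2 • (star a * a) ≤ (‖x‖ ^ 2) ^ 2 • ⟪y, y⟫_A := by
    have h := smul_inner_add_inner_le (x <• a) y (‖x‖ ^ 2)
    rw [inner_op_smul_left, inner_op_smul_right, ← star_inner x y, inner_op_smul_left,
      inner_op_smul_right, smul_add, ← mul_assoc] at h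
    have hconj : star a * ⟪x, x⟫_A * a ≤ ‖x‖ ^ 2 • (star a * a) := by
      rw [norm_sq_eq_norm_inner_self (A := A)]
      exact CStarAlgebra.star_left_conjugate_le_norm_smul (star_inner x x)
    exact le_of_add_le_add_left (h.trans (add_le_add_left hconj _))
  have hnorm := CStarAlgebra.norm_le_norm_of_nonneg_of_le
    (smul_nonneg (by positivity) (star_mul_self_nonneg a)) key
  rw [norm_smul, norm_smul, CStarRing.norm_star_mul_self, ← norm_sq_eq_norm_inner_self,
    Real.norm_of_nonneg (by positivity), Real.norm_of_nonneg (by positivity)] at hnorm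
  refine (pow_le_pow_iff_left₀ (norm_nonneg a) (by positivity) two_ne_zero).mp ?_
  exact le_of_mul_le_mul_left (by linarith) (by positivity : 0 < ‖x‖ ^ 2)

noncomputable def innerL (x : E) : E →L[ℂ] A :=
  (innerₗ x).mkContinuous ‖x‖ (norm_inner_le x)

lemma innerL_apply (x y : E) : innerL x y = ⟪x, y⟫_A := rfl

theorem norm_sum_sq_le_of_bessel (hTS : ∀ i x y, ⟪T i x, y⟫_A = ⟪x, S i y⟫_A)
    (hC : 0 < C) {s : Finset ι} (hT : ∀ x, ‖∑ i ∈ s, ⟪T i x, T i x⟫_A‖ ≤ C ^ 2 * ‖x‖ ^ 2)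
    (y : ι → E) : ‖∑ i ∈ s, S i (y i)‖ ^ 2 ≤ C ^ 2 * ‖∑ i ∈ s, ⟪y i, y i⟫_A‖ := by
  set z := ∑ i ∈ s, S i (y i)
  have hzz : ∑ i ∈ s, ⟪T i z, y i⟫_A = ⟪z, z⟫_A := by
    rw [inner_sum_right]
    exact Finset.sum_congr rfl fun i _ => hTS i z (y i)
  have hzz' : ∑ i ∈ s, ⟪y i, T i z⟫_A = ⟪z, z⟫_A := by
    rw [← star_inner z z, ← hzz, star_sum]
    exact Finset.sum_congr rfl fun i _ => (star_inner _ _).symm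
  have hamgm := smul_sum_inner_add_inner_le s (fun i => T i z) y (C ^ 2)
  rw [hzz, hzz'] at hamgm
  have hnorm := CStarAlgebra.norm_le_norm_of_nonneg_of_le
    (smul_nonneg (by positivity) (add_nonneg inner_self_nonneg inner_self_nonneg)) hamgm
  have : C ^ 2 * (2 * ‖z‖ ^ 2) ≤ C ^ 2 * ‖z‖ ^ 2 + (C ^ 2) ^ 2 * ‖∑ i ∈ s, ⟪y i, y i⟫_A‖ := by
    calc C ^ 2 * (2 * ‖z‖ ^ 2) = ‖C ^ 2 • (⟪z, z⟫_A + ⟪z, z⟫_A)‖ := by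
          rw [← two_smul ℝ, norm_smul, norm_smul, ← norm_sq_eq_norm_inner_self, Real.norm_two,
            Real.norm_of_nonneg (by positivity)]
      _ ≤ _ := hnorm
      _ ≤ _ := by
          grw [norm_add_le, norm_smul, hT z, Real.norm_of_nonneg (by positivity)]
  exact le_of_mul_le_mul_left (by linarith) (by positivity : 0 < C ^ 2)

section Complete

variable [CompleteSpace E] {y : ι → E}

theorem summable_of_bessel (hTS : ∀ i x y, ⟪T i x, y⟫_A = ⟪x, S i y⟫_A) (hC : 0 < C)
    (hT : ∀ (s : Finset ι) x, ‖∑ i ∈ s, ⟪T i x, T i x⟫_A‖ ≤ C ^ 2 * ‖x‖ ^ 2)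
    (hy : Summable fun i => ⟪y i, y i⟫_A) : Summable fun i => S i (y i) := by
  rw [summable_iff_vanishing_norm] at hy ⊢
  intro ε hε
  obtain ⟨s, hs⟩ := hy ((ε / C) ^ 2) (by positivity)
  refine ⟨s, fun t ht => lt_of_pow_lt_pow_left₀ 2 hε.le ?_⟩
  calc ‖∑ i ∈ t, S i (y i)‖ ^ 2 ≤ C ^ 2 * ‖∑ i ∈ t, ⟪y i, y i⟫_A‖ :=
        norm_sum_sq_le_of_bessel hTS hC (hT t) y
    _ < C ^ 2 * (ε / C) ^ 2 := by gcongr; exact hs t ht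
    _ = ε ^ 2 := by field_simp

theorem norm_tsum_sq_le_of_bessel (hTS : ∀ i x y, ⟪T i x, y⟫_A = ⟪x, S i y⟫_A) (hC : 0 < C)
    (hT : ∀ (s : Finset ι) x, ‖∑ i ∈ s, ⟪T i x, T i x⟫_A‖ ≤ C ^ 2 * ‖x‖ ^ 2)
    (hy : Summable fun i => ⟪y i, y i⟫_A) :
    ‖∑' i, S i (y i)‖ ^ 2 ≤ C ^ 2 * ‖∑' i, ⟪y i, y i⟫_A‖ := by
  refine le_of_tendsto ((summable_of_bessel hTS hC hT hy).hasSum.norm.pow 2)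
    (Filter.Eventually.of_forall fun s => ?_)
  calc ‖∑ i ∈ s, S i (y i)‖ ^ 2 ≤ C ^ 2 * ‖∑ i ∈ s, ⟪y i, y i⟫_A‖ :=
        norm_sum_sq_le_of_bessel hTS hC (hT s) y
    _ ≤ C ^ 2 * ‖∑' i, ⟪y i, y i⟫_A‖ := by
        gcongr
        exact CStarAlgebra.norm_sum_le_of_tsum_le (fun i => inner_self_nonneg) hy le_rfl s

theorem hasSum_inner_of_bessel (hTS : ∀ i x y, ⟪T i x, y⟫_A = ⟪x, S i y⟫_A) (hC : 0 < C)
    (hT : ∀ (s : Finset ι) x, ‖∑ i ∈ s, ⟪T i x, T i x⟫_A‖ ≤ C ^ 2 * ‖x‖ ^ 2)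
    (hy : Summable fun i => ⟪y i, y i⟫_A) (x : E) :
    HasSum (fun i => ⟪T i x, y i⟫_A) ⟪x, ∑' i, S i (y i)⟫_A := by
  simpa only [innerL_apply, hTS] using (summable_of_bessel hTS hC hT hy).hasSum.mapL (innerL x)

end Complete

end Order

end RightCStarModule

open RightCStarModule

/-- Theorem 3.3: if `((ℌ_n, ω_n))_n` is a *-fusion frame of `H`, then the synthesis operator
`𝒯 : H → l₂(H)`, `x ↦ (ω_n • P_{ℌ_n} x)_n`, is a well-defined bounded (𝔄-linear) adjointable
operator whose adjoint is the well-defined bounded operator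
`𝒯* : l₂(H) → H`, `(y_n)_n ↦ ∑_n ω_n • P_{ℌ_n} (y_n)`. -/
theorem fusionFrame_synthesis_adjointable
    (P : ℕ → H →L[ℂ] H) (ℌ : ℕ → Submodule 𝔄ᵐᵒᵖ H) (ω : ℕ → 𝔄)
    (hproj : ∀ n, IsOrthoProjectionOnto (P n) (ℌ n))
    (hw : IsWeight ω) (hframe : IsFusionFrame P ω) :
    -- `𝒯` is well defined: `𝒯 x` lies in `l₂(H)` for every `x`
    (∀ x : H, Summable (fun n => ⟪(P n x) <• ω n, (P n x) <• ω n⟫_𝔄)) ∧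
    -- `𝒯` is bounded: `‖𝒯 x‖_{l₂(H)}² ≤ C² ‖x‖²`
    (∃ C : ℝ, 0 < C ∧ ∀ x : H,
      ‖∑' n, ⟪(P n x) <• ω n, (P n x) <• ω n⟫_𝔄‖ ≤ C ^ 2 * ‖x‖ ^ 2) ∧
    -- `𝒯*` is well defined: the series `∑_n ω_n • P_{ℌ_n}(y_n)` converges for `y ∈ l₂(H)`
    (∀ y : ℕ → H, Summable (fun n => ⟪y n, y n⟫_𝔄) →
      Summable (fun n => (P n (y n)) <• ω n)) ∧
    -- `𝒯*` is bounded
    (∃ C : ℝ, 0 < C ∧ ∀ y : ℕ → H, Summable (fun n => ⟪y n, y n⟫_𝔄) →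
      ‖∑' n, (P n (y n)) <• ω n‖ ^ 2 ≤ C ^ 2 * ‖∑' n, ⟪y n, y n⟫_𝔄‖) ∧
    -- `𝒯*` is the adjoint of `𝒯`: `⟪𝒯 x, y⟫_{l₂(H)} = ⟪x, 𝒯* y⟫`
    (∀ (x : H) (y : ℕ → H), Summable (fun n => ⟪y n, y n⟫_𝔄) →
      Summable (fun n => ⟪(P n x) <• ω n, y n⟫_𝔄) ∧
      (∑' n, ⟪(P n x) <• ω n, y n⟫_𝔄) = ⟪x, ∑' n, (P n (y n)) <• ω n⟫_𝔄) := by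
  obtain ⟨A, B, -, -, hframe⟩ := hframe
  set W : ℕ → H → H := fun n x => P n x <• ω n
  have hsa n : IsSelfAdjoint (ω n) := .of_nonneg (hw n).2.1
  have hadj n x y : ⟪W n x, y⟫_𝔄 = ⟪x, W n y⟫_𝔄 := by
    rw [inner_op_smul_left, (hproj n).2.2.1, ← inner_op_smul_left,
      inner_op_smul_of_central (hw n).1 (hsa n)]
  have hweight n x : ⟪W n x, W n x⟫_𝔄 = ω n ^ 2 * ⟪P n x, P n x⟫_𝔄 :=
    inner_op_smul_self_of_central (hw n).1 (hsa n) _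
  have hsum x : Summable fun n => ⟪W n x, W n x⟫_𝔄 := by
    simpa only [hweight] using (hframe x).1
  have hle x : ∑' n, ⟪W n x, W n x⟫_𝔄 ≤ ⟪x <• B, x <• B⟫_𝔄 := by
    simpa only [hweight] using (hframe x).2.2
  have hB (x : H) : ‖⟪x <• B, x <• B⟫_𝔄‖ ≤ (‖B‖ + 1) ^ 2 * ‖x‖ ^ 2 := by
    rw [← norm_sq_eq_norm_inner_self, mul_comm, ← mul_pow]
    grw [norm_op_smul_le]
    gcongr
    linarith
  have hbessel s x : ‖∑ n ∈ s, ⟪W n x, W n x⟫_𝔄‖ ≤ (‖B‖ + 1) ^ 2 * ‖x‖ ^ 2 :=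
    (CStarAlgebra.norm_sum_le_of_tsum_le (fun n => RightCStarModule.inner_self_nonneg) (hsum x)
      (hle x) s).trans (hB x)
  have hC : 0 < ‖B‖ + 1 := by positivity
  refine ⟨hsum, ⟨‖B‖ + 1, hC, fun x => ?_⟩, fun y hy => ?_, ⟨‖B‖ + 1, hC, fun y hy => ?_⟩,
    fun x y hy => ?_⟩
  · exact (CStarAlgebra.norm_le_norm_of_nonneg_of_le
      (tsum_nonneg fun n => RightCStarModule.inner_self_nonneg) (hle x)).trans (hB x)
  · exact summable_of_bessel (S := W) hadj hC hbessel hy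
  · exact norm_tsum_sq_le_of_bessel hadj hC hbessel hy
  · have h := hasSum_inner_of_bessel hadj hC hbessel hy x
    exact ⟨h.summable, h.tsum_eq⟩
end

section
/- In the Hilbert space l₂(ℂ) of square-summable complex sequences indexed by ℕ* (viewed as a Hilbert ℂ-module), let U₀ := {(x_n) ∈ l₂(ℂ) : x_n = 0 for all n ∉ 4ℕ} and V₀ := {(x_n) ∈ l₂(ℂ) : x_n = 0 for all n ∉ 2ℕ}. Then U₀ and V₀ are closed (orthogonally complemented) subspaces of l₂(ℂ) which are not orthogonal, yet ‖P_{U₀} − P_{V₀}‖ = 1; in particular the angle between U₀ and V₀ equals π/2 even though U₀ and V₀ are not orthogonal. -/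
/-!
The vector `e₂` lies in `V₀` and is orthogonal to `U₀`, so every orthogonal projection `P` onto
`U₀` kills it while every orthogonal projection `Q` onto `V₀` fixes it; hence `‖P - Q‖ ≥ 1`.
The reverse inequality holds for any two orthogonal projections, by the parallelogram law.
The subspaces are not orthogonal since `e₄` lies in both.
-/

open scoped InnerProductSpace
open RCLike

section SymmetricProjection

variable {𝕜 E : Type*} [RCLike 𝕜] [NormedAddCommGroup E] [InnerProductSpace 𝕜 E]

-- `‖a - b‖² = 2‖a‖² + 2‖b‖² - ‖a + b‖²`, and the hypotheses rewrite `0 ≤ ‖x - (a + b)‖²` as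
-- `‖a + b‖² ≥ 2‖a‖² + 2‖b‖² - ‖x‖²`.
theorem norm_sub_le_of_re_inner_eq_norm_sq {x a b : E} (ha : re ⟪x, a⟫_𝕜 = ‖a‖ ^ 2)
    (hb : re ⟪x, b⟫_𝕜 = ‖b‖ ^ 2) : ‖a - b‖ ≤ ‖x‖ := by
  have hsub := norm_sub_sq (𝕜 := 𝕜) a b
  have hadd := norm_add_sq (𝕜 := 𝕜) a b
  have hx := norm_sub_sq (𝕜 := 𝕜) x (a + b)
  rw [inner_add_right, map_add, ha, hb] at hx
  nlinarith [sq_nonneg ‖x - (a + b)‖, norm_nonneg (a - b), norm_nonneg x]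

namespace LinearMap.IsSymmetricProjection

variable {T : E →ₗ[𝕜] E}

theorem re_inner_apply_eq_norm_sq (hT : T.IsSymmetricProjection) (x : E) :
    re ⟪x, T x⟫_𝕜 = ‖T x‖ ^ 2 := by
  have hTT : T (T x) = T x := LinearMap.congr_fun hT.isIdempotentElem.eq x
  rw [← hTT, ← hT.isSymmetric, hTT, inner_self_eq_norm_sq]

theorem apply_eq_zero_of_forall_inner_apply_eq_zero (hT : T.IsSymmetricProjection) {e : E}
    (he : ∀ y, ⟪e, T y⟫_𝕜 = 0) : T e = 0 := by
  have hTT : T (T e) = T e := LinearMap.congr_fun hT.isIdempotentElem.eq e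
  rw [← inner_self_eq_zero (𝕜 := 𝕜), hT.isSymmetric, hTT, he]

theorem norm_sub_apply_le {S : E →ₗ[𝕜] E} (hT : T.IsSymmetricProjection)
    (hS : S.IsSymmetricProjection) (x : E) : ‖T x - S x‖ ≤ ‖x‖ :=
  norm_sub_le_of_re_inner_eq_norm_sq (hT.re_inner_apply_eq_norm_sq x)
    (hS.re_inner_apply_eq_norm_sq x)

end LinearMap.IsSymmetricProjection

theorem ContinuousLinearMap.opNorm_sub_eq_one_of_isSymmetricProjection {P Q : E →L[𝕜] E}
    (hP : (P : E →ₗ[𝕜] E).IsSymmetricProjection) (hQ : (Q : E →ₗ[𝕜] E).IsSymmetricProjection)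
    {e : E} (he : ‖e‖ = 1) (hPe : P e = 0) (hQe : Q e = e) : ‖P - Q‖ = 1 := by
  refine le_antisymm (opNorm_le_bound _ zero_le_one fun x => ?_) ?_
  · simpa using hP.norm_sub_apply_le hQ x
  · simpa [hPe, hQe, he] using (P - Q).le_opNorm e

end SymmetricProjection

namespace lp

variable {ι : Type*} {E : ι → Type*} [∀ i, NormedAddCommGroup (E i)] {p : ENNReal}

theorem isClosed_setOf_forall_imp_apply_eq_zero [Fact (1 ≤ p)] (S : ι → Prop) :
    IsClosed {x : lp E p | ∀ i, S i → x i = 0} := by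
  simp only [Set.ofPred_forall]
  exact isClosed_iInter fun i => isClosed_iInter fun _ =>
    isClosed_eq (lipschitzWith_one_eval p i).continuous continuous_const

theorem single_mem_setOf_forall_imp_apply_eq_zero [DecidableEq ι] {S : ι → Prop} {i : ι}
    (hi : ¬ S i) (a : E i) : lp.single p i a ∈ {x : lp E p | ∀ j, S j → x j = 0} :=
  fun _ hj => lp.single_apply_ne p i a fun h => hi (h ▸ hj)

end lp

/-- In the Hilbert space `l₂(ℂ)` of square-summable complex sequences indexed by `ℕ*`,
let `U₀ := {x : x_n = 0 for n ∉ 4ℕ}` and `V₀ := {x : x_n = 0 for n ∉ 2ℕ}`. Then `U₀` and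
`V₀` are closed subspaces which are not orthogonal, yet `‖P_{U₀} - P_{V₀}‖ = 1`; in
particular the angle between `U₀` and `V₀` is `π/2` although they are not orthogonal. -/
theorem not_orthogonal_but_angle_pi_div_two
    (U₀ V₀ : Set (lp (fun _ : ℕ+ => ℂ) 2))
    (hU₀ : U₀ = {x | ∀ n : ℕ+, ¬ (4 ∣ (n : ℕ)) → x n = 0})
    (hV₀ : V₀ = {x | ∀ n : ℕ+, ¬ (2 ∣ (n : ℕ)) → x n = 0}) :
    IsClosed U₀ ∧ IsClosed V₀ ∧
    -- `U₀` and `V₀` are not orthogonal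
    ¬ (∀ u ∈ U₀, ∀ v ∈ V₀, ⟪u, v⟫_ℂ = 0) ∧
    -- yet the distance between the two orthogonal projections is `1`,
    -- i.e. the angle between `U₀` and `V₀` is `π/2`
    (∀ P Q : lp (fun _ : ℕ+ => ℂ) 2 →L[ℂ] lp (fun _ : ℕ+ => ℂ) 2,
      (∀ x, P (P x) = P x) → (∀ x y, ⟪P x, y⟫_ℂ = ⟪x, P y⟫_ℂ) →
      (∀ x, P x ∈ U₀) → (∀ x ∈ U₀, P x = x) →
      (∀ x, Q (Q x) = Q x) → (∀ x y, ⟪Q x, y⟫_ℂ = ⟪x, Q y⟫_ℂ) →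
      (∀ x, Q x ∈ V₀) → (∀ x ∈ V₀, Q x = x) →
      ‖P - Q‖ = 1 ∧ Real.arcsin ‖P - Q‖ = Real.pi / 2) := by
  subst hU₀ hV₀
  set e₂ : lp (fun _ : ℕ+ => ℂ) 2 := lp.single 2 2 1
  set e₄ : lp (fun _ : ℕ+ => ℂ) 2 := lp.single 2 4 1
  refine ⟨lp.isClosed_setOf_forall_imp_apply_eq_zero _,
    lp.isClosed_setOf_forall_imp_apply_eq_zero _, fun h => ?_,
    fun P Q hPi hPs hPU _ hQi hQs _ hQV => ?_⟩
  · have he₄ : ⟪e₄, e₄⟫_ℂ = 0 :=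
      h e₄ (lp.single_mem_setOf_forall_imp_apply_eq_zero (by decide) _)
        e₄ (lp.single_mem_setOf_forall_imp_apply_eq_zero (by decide) _)
    simp [e₄] at he₄
  · have hP : (P : lp (fun _ : ℕ+ => ℂ) 2 →ₗ[ℂ] lp (fun _ : ℕ+ => ℂ) 2).IsSymmetricProjection :=
      ⟨LinearMap.ext hPi, hPs⟩
    have hQ : (Q : lp (fun _ : ℕ+ => ℂ) 2 →ₗ[ℂ] lp (fun _ : ℕ+ => ℂ) 2).IsSymmetricProjection :=
      ⟨LinearMap.ext hQi, hQs⟩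
    have hPe₂ : P e₂ = 0 := hP.apply_eq_zero_of_forall_inner_apply_eq_zero fun y => by
      simp [e₂, lp.inner_single_left, hPU y 2 (by decide)]
    have hQe₂ : Q e₂ = e₂ := hQV e₂ (lp.single_mem_setOf_forall_imp_apply_eq_zero (by decide) _)
    have hnorm : ‖P - Q‖ = 1 :=
      ContinuousLinearMap.opNorm_sub_eq_one_of_isSymmetricProjection hP hQ
        (by simp [e₂, lp.norm_single]) hPe₂ hQe₂
    exact ⟨hnorm, by rw [hnorm, Real.arcsin_one]⟩
end
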